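/- Let B = [a₁,b₁]×⋯×[a_n,b_n] be an axis-parallel box with a_ι < b_ι, and let f ∈ C(B). For x ∈ B and ι ∈ [1:n], define f_{x,ι} : [−1,1] → ℂ by f_{x,ι}(t) := f(x₁,…,x_{ι−1},Φ_{[a_ι,b_ι]}(t),x_{ι+1},…,x_n). Then ‖f − 𝕀_B[f]‖_{∞,B} ≤ Σ_{ι=1}^n Λ_m^{ι−1} · max{‖f_{x,ι} − 𝕀[f_{x,ι}]‖_{∞,[−1,1]} : x ∈ B}. -/

import Mathlib

/-!
Write `𝕀_ι` for one-dimensional interpolation in the coordinate `ι` alone, and `P_s` for tensor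
interpolation in the coordinates of `s` only, so that `P_∅ = id`, `P_univ = 𝕀_B` and
`P_{insert ι s} = P_s ∘ 𝕀_ι` for `ι ∉ s`. Each `𝕀_ι` acts on the slices `f_{x,ι}`, so by the
definition of `Λ_m` it has norm at most `Λ_m` on `C(B)`, and `P_s` has norm at most `Λ_m ^ #s`.
Adding the coordinates in increasing order and telescoping,
`f - P_{<k+1} f = (f - P_{<k} f) + P_{<k} (f - 𝕀_k f)`, where `‖f - 𝕀_k f‖` is the maximal
one-dimensional error in direction `k`.
-/

open Complex Set

/-- The axis-parallel box `[a₁,b₁] × ⋯ × [a_n,b_n]`. -/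
def boxSet {n : ℕ} (a b : Fin n → ℝ) : Set (Fin n → ℝ) := {x | ∀ ι, x ι ∈ Set.Icc (a ι) (b ι)}

/-- Lagrange polynomial `L_ν(z) = ∏_{μ≠ν} (z−ξ_μ)/(ξ_ν−ξ_μ)` for nodes `ξ` on `[−1,1]`. -/
noncomputable def lagrangeC {m : ℕ} (ξ : Fin (m + 1) → ℝ) (ν : Fin (m + 1)) (z : ℂ) : ℂ :=
  ∏ μ ∈ Finset.univ.erase ν, (z - (ξ μ : ℂ)) / ((ξ ν : ℂ) - (ξ μ : ℂ))

/-- Interpolation operator `𝕀[f] = Σ_ν f(ξ_ν)·L_ν` on `[−1,1]`. -/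
noncomputable def interpC {m : ℕ} (ξ : Fin (m + 1) → ℝ) (f : ℝ → ℂ) (x : ℝ) : ℂ :=
  ∑ ν, f (ξ ν) * lagrangeC ξ ν (x : ℂ)

/-- The maximum norm `‖f‖_{∞,s}` of a function on a set. -/
noncomputable def supNormOn (f : ℝ → ℂ) (s : Set ℝ) : ℝ :=
  sSup ((fun x => ‖f x‖) '' s)

/-- The Lebesgue constant `Λ_m = sup{‖𝕀[f]‖_{∞,[−1,1]}/‖f‖_{∞,[−1,1]} : f ∈ C[−1,1] \ {0}}`. -/
noncomputable def lebesgueConst {m : ℕ} (ξ : Fin (m + 1) → ℝ) : ℝ :=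
  sSup {r : ℝ | ∃ f : ℝ → ℂ, ContinuousOn f (Set.Icc (-1) 1) ∧
    (∃ x ∈ Set.Icc (-1 : ℝ) 1, f x ≠ 0) ∧
    r = supNormOn (interpC ξ f) (Set.Icc (-1) 1) / supNormOn f (Set.Icc (-1) 1)}

/-- The affine map `Φ_{[a,b]}(t) = (b+a)/2 + (b−a)/2·t` taking `[−1,1]` to `[a,b]`. -/
noncomputable def phiAB (a b t : ℝ) : ℝ := (b + a) / 2 + (b - a) / 2 * t

/-- The inverse `Φ_{[a,b]}^{−1}(x) = (2x − a − b)/(b − a)`. -/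
noncomputable def phiInvAB (a b x : ℝ) : ℝ := (2 * x - (a + b)) / (b - a)

/-- Transformed tensor interpolation point `ξ_{B,ν}` of the box `[a₁,b₁]×⋯×[a_n,b_n]`. -/
noncomputable def xiPoint {n m : ℕ} (ξ : Fin (m + 1) → ℝ) (a b : Fin n → ℝ)
    (ν : Fin n → Fin (m + 1)) : Fin n → ℝ :=
  fun ι => phiAB (a ι) (b ι) (ξ (ν ι))

/-- Transformed tensor Lagrange function `L_{B,ν}(x) = ∏_ι L_{ν_ι}(Φ_{[a_ι,b_ι]}^{−1}(x_ι))`. -/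
noncomputable def lagTensor {n m : ℕ} (ξ : Fin (m + 1) → ℝ) (a b : Fin n → ℝ)
    (ν : Fin n → Fin (m + 1)) (x : Fin n → ℝ) : ℂ :=
  ∏ ι, lagrangeC ξ (ν ι) ((phiInvAB (a ι) (b ι) (x ι) : ℝ) : ℂ)

/-- The tensor interpolation operator
`𝕀_B[f] = Σ_{ν} f(ξ_{B,ν})·L_{B,ν}` on the box `B = [a₁,b₁]×⋯×[a_n,b_n]`. -/
noncomputable def tensorInterp {n m : ℕ} (ξ : Fin (m + 1) → ℝ) (a b : Fin n → ℝ)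
    (f : (Fin n → ℝ) → ℂ) (x : Fin n → ℝ) : ℂ :=
  ∑ ν : Fin n → Fin (m + 1), f (xiPoint ξ a b ν) * lagTensor ξ a b ν x

lemma supNormOn_nonneg (f : ℝ → ℂ) (s : Set ℝ) : 0 ≤ supNormOn f s :=
  Real.sSup_nonneg <| by rintro _ ⟨t, -, rfl⟩; exact norm_nonneg _

lemma supNormOn_le {f : ℝ → ℂ} {s : Set ℝ} {S : ℝ} (hs : s.Nonempty)
    (hS : ∀ t ∈ s, ‖f t‖ ≤ S) : supNormOn f s ≤ S :=
  csSup_le (hs.image _) <| by rintro _ ⟨t, ht, rfl⟩; exact hS t ht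

lemma norm_le_supNormOn {f : ℝ → ℂ} {s : Set ℝ} (hs : IsCompact s) (hf : ContinuousOn f s)
    {t : ℝ} (ht : t ∈ s) : ‖f t‖ ≤ supNormOn f s :=
  le_csSup (hs.bddAbove_image hf.norm) (mem_image_of_mem _ ht)

lemma continuous_lagrangeC {m : ℕ} (ξ : Fin (m + 1) → ℝ) (ν : Fin (m + 1)) :
    Continuous fun t : ℝ => lagrangeC ξ ν t := by
  unfold lagrangeC
  fun_prop

lemma continuous_interpC {m : ℕ} (ξ : Fin (m + 1) → ℝ) (g : ℝ → ℂ) :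
    Continuous (interpC ξ g) := by
  unfold interpC
  have := continuous_lagrangeC ξ
  fun_prop

lemma norm_interpC_le {m : ℕ} {ξ : Fin (m + 1) → ℝ} (hξ : ∀ ν, ξ ν ∈ Icc (-1 : ℝ) 1)
    {g : ℝ → ℂ} {S : ℝ} (hS : ∀ u ∈ Icc (-1 : ℝ) 1, ‖g u‖ ≤ S) (t : ℝ) :
    ‖interpC ξ g t‖ ≤ S * ∑ ν, ‖lagrangeC ξ ν t‖ := by
  rw [Finset.mul_sum]
  refine (norm_sum_le _ _).trans (Finset.sum_le_sum fun ν _ => ?_)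
  rw [norm_mul]
  exact mul_le_mul_of_nonneg_right (hS _ (hξ ν)) (norm_nonneg _)

lemma lebesgueConst_nonneg {m : ℕ} (ξ : Fin (m + 1) → ℝ) : 0 ≤ lebesgueConst ξ :=
  Real.sSup_nonneg <| by
    rintro _ ⟨f, -, -, rfl⟩
    exact div_nonneg (supNormOn_nonneg _ _) (supNormOn_nonneg _ _)

lemma bddAbove_lebesgueRatios {m : ℕ} {ξ : Fin (m + 1) → ℝ} (hξ : ∀ ν, ξ ν ∈ Icc (-1 : ℝ) 1) :
    BddAbove {r : ℝ | ∃ f : ℝ → ℂ, ContinuousOn f (Set.Icc (-1) 1) ∧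
      (∃ x ∈ Set.Icc (-1 : ℝ) 1, f x ≠ 0) ∧
      r = supNormOn (interpC ξ f) (Set.Icc (-1) 1) / supNormOn f (Set.Icc (-1) 1)} := by
  have hcont : Continuous fun t : ℝ => ∑ ν, ‖lagrangeC ξ ν t‖ := by
    have := continuous_lagrangeC ξ
    fun_prop
  obtain ⟨C, hC⟩ := (isCompact_Icc (a := -1) (b := 1)).bddAbove_image hcont.continuousOn
  refine ⟨C, ?_⟩
  rintro _ ⟨f, hf, ⟨u, hu, hfu⟩, rfl⟩
  have hpos : 0 < supNormOn f (Icc (-1) 1) :=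
    (norm_pos_iff.mpr hfu).trans_le (norm_le_supNormOn isCompact_Icc hf hu)
  rw [div_le_iff₀ hpos]
  refine supNormOn_le ⟨u, hu⟩ fun t ht => ?_
  calc ‖interpC ξ f t‖
      ≤ supNormOn f (Icc (-1) 1) * ∑ ν, ‖lagrangeC ξ ν t‖ :=
        norm_interpC_le hξ (fun v hv => norm_le_supNormOn isCompact_Icc hf hv) t
    _ ≤ supNormOn f (Icc (-1) 1) * C := by gcongr; exact hC (mem_image_of_mem _ ht)
    _ = C * supNormOn f (Icc (-1) 1) := mul_comm _ _

lemma norm_interpC_le_lebesgueConst_mul {m : ℕ} {ξ : Fin (m + 1) → ℝ}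
    (hξ : ∀ ν, ξ ν ∈ Icc (-1 : ℝ) 1) {g : ℝ → ℂ} (hg : ContinuousOn g (Icc (-1) 1)) {S : ℝ}
    (hS : ∀ u ∈ Icc (-1 : ℝ) 1, ‖g u‖ ≤ S) {t : ℝ} (ht : t ∈ Icc (-1 : ℝ) 1) :
    ‖interpC ξ g t‖ ≤ lebesgueConst ξ * S := by
  by_cases hz : ∃ u ∈ Icc (-1 : ℝ) 1, g u ≠ 0
  · obtain ⟨u, hu, hgu⟩ := hz
    have hpos : 0 < supNormOn g (Icc (-1) 1) :=
      (norm_pos_iff.mpr hgu).trans_le (norm_le_supNormOn isCompact_Icc hg hu)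
    have hratio : supNormOn (interpC ξ g) (Icc (-1) 1) / supNormOn g (Icc (-1) 1) ≤
        lebesgueConst ξ :=
      le_csSup (bddAbove_lebesgueRatios hξ) ⟨g, hg, ⟨u, hu, hgu⟩, rfl⟩
    calc ‖interpC ξ g t‖ ≤ supNormOn (interpC ξ g) (Icc (-1) 1) :=
          norm_le_supNormOn isCompact_Icc (continuous_interpC ξ g).continuousOn ht
      _ ≤ lebesgueConst ξ * supNormOn g (Icc (-1) 1) := (div_le_iff₀ hpos).mp hratio
      _ ≤ lebesgueConst ξ * S := by
        gcongr
        · exact lebesgueConst_nonneg ξ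
        · exact supNormOn_le ⟨u, hu⟩ hS
  · push Not at hz
    have hzero : interpC ξ g t = 0 :=
      Finset.sum_eq_zero fun ν _ => by rw [hz _ (hξ ν), zero_mul]
    rw [hzero, norm_zero]
    exact mul_nonneg (lebesgueConst_nonneg ξ) ((norm_nonneg _).trans (hS t ht))

lemma phiAB_mem_Icc {a b t : ℝ} (hab : a ≤ b) (ht : t ∈ Icc (-1 : ℝ) 1) :
    phiAB a b t ∈ Icc a b := by
  obtain ⟨h₁, h₂⟩ := ht
  unfold phiAB
  constructor <;> nlinarith

lemma phiInvAB_mem_Icc {a b c : ℝ} (hab : a < b) (hc : c ∈ Icc a b) :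
    phiInvAB a b c ∈ Icc (-1 : ℝ) 1 := by
  obtain ⟨h₁, h₂⟩ := hc
  have hba : 0 < b - a := by linarith
  unfold phiInvAB
  rw [mem_Icc, le_div_iff₀ hba, div_le_iff₀ hba]
  constructor <;> linarith

lemma phiAB_phiInvAB {a b : ℝ} (hab : a ≠ b) (c : ℝ) : phiAB a b (phiInvAB a b c) = c := by
  have : b - a ≠ 0 := sub_ne_zero.mpr hab.symm
  unfold phiAB phiInvAB
  field_simp
  ring

lemma isCompact_boxSet {n : ℕ} (a b : Fin n → ℝ) : IsCompact (boxSet a b) := by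
  have : boxSet a b = univ.pi fun ι => Icc (a ι) (b ι) := by
    ext
    simp [boxSet, Pi.le_def, forall_and]
  rw [this]
  exact isCompact_univ_pi fun ι => isCompact_Icc

lemma update_mem_boxSet {n : ℕ} {a b x : Fin n → ℝ} (hx : x ∈ boxSet a b) {ι : Fin n} {c : ℝ}
    (hc : c ∈ Icc (a ι) (b ι)) : Function.update x ι c ∈ boxSet a b := by
  intro j
  rcases eq_or_ne j ι with rfl | hj
  · simpa using hc
  · simpa [Function.update_of_ne hj] using hx j

/-- The paper's `f_{x,ι}`: `g` on the line through `x` in direction `ι`, parametrised by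
`[-1, 1]`. -/
noncomputable def coordSlice {n : ℕ} (a b : Fin n → ℝ) (g : (Fin n → ℝ) → ℂ) (ι : Fin n)
    (x : Fin n → ℝ) (t : ℝ) : ℂ :=
  g (Function.update x ι (phiAB (a ι) (b ι) t))

lemma continuousOn_coordSlice {n : ℕ} {a b : Fin n → ℝ} (hab : ∀ ι, a ι ≤ b ι)
    {g : (Fin n → ℝ) → ℂ} (hg : ContinuousOn g (boxSet a b)) (ι : Fin n) {x : Fin n → ℝ}
    (hx : x ∈ boxSet a b) : ContinuousOn (coordSlice a b g ι x) (Icc (-1) 1) := by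
  refine hg.comp (Continuous.continuousOn ?_) fun t ht =>
    update_mem_boxSet hx (phiAB_mem_Icc (hab ι) ht)
  unfold phiAB
  fun_prop

lemma norm_coordSlice_le {n : ℕ} {a b : Fin n → ℝ} (hab : ∀ ι, a ι ≤ b ι)
    {g : (Fin n → ℝ) → ℂ} {S : ℝ} (hS : ∀ y ∈ boxSet a b, ‖g y‖ ≤ S) (ι : Fin n)
    {x : Fin n → ℝ} (hx : x ∈ boxSet a b) {t : ℝ} (ht : t ∈ Icc (-1 : ℝ) 1) :
    ‖coordSlice a b g ι x t‖ ≤ S :=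
  hS _ (update_mem_boxSet hx (phiAB_mem_Icc (hab ι) ht))

noncomputable def interpCoord {n m : ℕ} (ξ : Fin (m + 1) → ℝ) (a b : Fin n → ℝ) (ι : Fin n)
    (g : (Fin n → ℝ) → ℂ) (x : Fin n → ℝ) : ℂ :=
  interpC ξ (coordSlice a b g ι x) (phiInvAB (a ι) (b ι) (x ι))

lemma continuousOn_interpCoord {n m : ℕ} {ξ : Fin (m + 1) → ℝ} (hξ : ∀ ν, ξ ν ∈ Icc (-1 : ℝ) 1)
    {a b : Fin n → ℝ} (hab : ∀ ι, a ι ≤ b ι) {g : (Fin n → ℝ) → ℂ}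
    (hg : ContinuousOn g (boxSet a b)) (ι : Fin n) :
    ContinuousOn (interpCoord ξ a b ι g) (boxSet a b) := by
  have hnode : ∀ ν, ContinuousOn
      (fun x => g (Function.update x ι (phiAB (a ι) (b ι) (ξ ν)))) (boxSet a b) := fun ν =>
    hg.comp (by fun_prop) fun x hx => update_mem_boxSet hx (phiAB_mem_Icc (hab ι) (hξ ν))
  unfold interpCoord interpC coordSlice
  refine continuousOn_finsetSum _ fun ν _ => (hnode ν).mul (Continuous.continuousOn ?_)
  exact (continuous_lagrangeC ξ ν).comp (by unfold phiInvAB; fun_prop)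

lemma norm_interpCoord_le {n m : ℕ} {ξ : Fin (m + 1) → ℝ} (hξ : ∀ ν, ξ ν ∈ Icc (-1 : ℝ) 1)
    {a b : Fin n → ℝ} (hab : ∀ ι, a ι < b ι) {g : (Fin n → ℝ) → ℂ}
    (hg : ContinuousOn g (boxSet a b)) {S : ℝ} (hS : ∀ y ∈ boxSet a b, ‖g y‖ ≤ S) (ι : Fin n)
    {x : Fin n → ℝ} (hx : x ∈ boxSet a b) :
    ‖interpCoord ξ a b ι g x‖ ≤ lebesgueConst ξ * S :=
  norm_interpC_le_lebesgueConst_mul hξ (continuousOn_coordSlice (fun ι => (hab ι).le) hg ι hx)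
    (fun _ => norm_coordSlice_le (fun ι => (hab ι).le) hS ι hx) (phiInvAB_mem_Icc (hab ι) (hx ι))

lemma sum_ite_sum_update_eq_sum {α β M : Type*} [Fintype α] [DecidableEq α] [Fintype β]
    [DecidableEq β] [AddCommMonoid M] (i : α) (c : β) (F : (α → β) → M) :
    ∑ ν : α → β, (if ν i = c then ∑ μ, F (Function.update ν i μ) else 0) = ∑ ρ, F ρ := by
  have hupdate : ∀ d μ (r : {j // j ≠ i} → β),
      Function.update ((Equiv.funSplitAt i β).symm (d, r)) i μ =
        (Equiv.funSplitAt i β).symm (μ, r) := by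
    intro d μ r
    ext j
    rcases eq_or_ne j i with rfl | hj
    · simp
    · simp [hj]
  simp only [← (Equiv.funSplitAt i β).symm.sum_comp, Fintype.sum_prod_type, hupdate]
  simp [Finset.sum_comm (γ := β)]

section PartialInterp

variable {n m : ℕ} (ξ : Fin (m + 1) → ℝ) (a b : Fin n → ℝ)

noncomputable def partialNode (s : Finset (Fin n)) (ν : Fin n → Fin (m + 1)) (x : Fin n → ℝ) :
    Fin n → ℝ :=
  fun i => if i ∈ s then phiAB (a i) (b i) (ξ (ν i)) else x i

/-- Outside `s` the weight selects the single node `ν i = 0`, so those coordinates of `x` are kept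
rather than interpolated. -/
noncomputable def partialWeight (s : Finset (Fin n)) (ν : Fin n → Fin (m + 1)) (x : Fin n → ℝ)
    (i : Fin n) : ℂ :=
  if i ∈ s then lagrangeC ξ (ν i) (phiInvAB (a i) (b i) (x i)) else if ν i = 0 then 1 else 0

noncomputable def partialInterp (s : Finset (Fin n)) (g : (Fin n → ℝ) → ℂ) (x : Fin n → ℝ) : ℂ :=
  ∑ ν : Fin n → Fin (m + 1), g (partialNode ξ a b s ν x) * ∏ i, partialWeight ξ a b s ν x i

lemma partialInterp_empty (g : (Fin n → ℝ) → ℂ) : partialInterp ξ a b ∅ g = g := by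
  ext x
  unfold partialInterp partialNode partialWeight
  simp [Finset.prod_boole, ← funext_iff]

lemma partialInterp_univ (g : (Fin n → ℝ) → ℂ) :
    partialInterp ξ a b Finset.univ g = tensorInterp ξ a b g := by
  ext x
  unfold partialInterp partialNode partialWeight tensorInterp xiPoint lagTensor
  simp

lemma partialInterp_sub (s : Finset (Fin n)) (g h : (Fin n → ℝ) → ℂ) :
    partialInterp ξ a b s (g - h) = partialInterp ξ a b s g - partialInterp ξ a b s h := by
  ext x
  simp only [partialInterp, Pi.sub_apply, sub_mul, Finset.sum_sub_distrib]

lemma update_partialNode (s : Finset (Fin n)) (ν : Fin n → Fin (m + 1)) (x : Fin n → ℝ)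
    (ι : Fin n) (μ : Fin (m + 1)) :
    Function.update (partialNode ξ a b s ν x) ι (phiAB (a ι) (b ι) (ξ μ)) =
      partialNode ξ a b (insert ι s) (Function.update ν ι μ) x := by
  ext i
  rcases eq_or_ne i ι with rfl | hi
  · simp [partialNode]
  · simp [partialNode, hi]

lemma partialWeight_insert_update_of_ne (s : Finset (Fin n)) (ν : Fin n → Fin (m + 1))
    (x : Fin n → ℝ) {ι i : Fin n} (hi : i ≠ ι) (μ : Fin (m + 1)) :
    partialWeight ξ a b (insert ι s) (Function.update ν ι μ) x i = partialWeight ξ a b s ν x i := by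
  simp [partialWeight, hi]

lemma partialInterp_insert {s : Finset (Fin n)} {ι : Fin n} (hι : ι ∉ s)
    (g : (Fin n → ℝ) → ℂ) :
    partialInterp ξ a b (insert ι s) g = partialInterp ξ a b s (interpCoord ξ a b ι g) := by
  ext x
  set T : (Fin n → Fin (m + 1)) → ℂ := fun ρ =>
    g (partialNode ξ a b (insert ι s) ρ x) * ∏ i, partialWeight ξ a b (insert ι s) ρ x i
  have hsummand : ∀ ν, interpCoord ξ a b ι g (partialNode ξ a b s ν x) *
      ∏ i, partialWeight ξ a b s ν x i =
        if ν ι = 0 then ∑ μ, T (Function.update ν ι μ) else 0 := by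
    intro ν
    have hnode : partialNode ξ a b s ν x ι = x ι := by simp [partialNode, hι]
    have hweight : partialWeight ξ a b s ν x ι = if ν ι = 0 then 1 else 0 := by
      simp [partialWeight, hι]
    rw [← Finset.mul_prod_erase _ _ (Finset.mem_univ ι), hweight]
    split_ifs with hν
    · simp only [interpCoord, interpC, coordSlice, hnode, update_partialNode, one_mul,
        Finset.sum_mul, T]
      refine Finset.sum_congr rfl fun μ _ => ?_
      rw [← Finset.mul_prod_erase _ _ (Finset.mem_univ ι), Finset.prod_congr rfl fun i hi =>
        partialWeight_insert_update_of_ne ξ a b s ν x (Finset.ne_of_mem_erase hi) μ]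
      have hself : partialWeight ξ a b (insert ι s) (Function.update ν ι μ) x ι =
          lagrangeC ξ μ (phiInvAB (a ι) (b ι) (x ι)) := by
        simp [partialWeight]
      rw [hself]
      ring
    · simp
  simp only [partialInterp, hsummand]
  exact (sum_ite_sum_update_eq_sum ι 0 T).symm

end PartialInterp

section Estimates

variable {n m : ℕ} {ξ : Fin (m + 1) → ℝ} {a b : Fin n → ℝ}

lemma norm_partialInterp_le (hξ : ∀ ν, ξ ν ∈ Icc (-1 : ℝ) 1) (hab : ∀ ι, a ι < b ι)
    (s : Finset (Fin n)) {g : (Fin n → ℝ) → ℂ} (hg : ContinuousOn g (boxSet a b)) {S : ℝ}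
    (hS : ∀ y ∈ boxSet a b, ‖g y‖ ≤ S) {x : Fin n → ℝ} (hx : x ∈ boxSet a b) :
    ‖partialInterp ξ a b s g x‖ ≤ lebesgueConst ξ ^ s.card * S := by
  induction s using Finset.induction_on generalizing g S with
  | empty => simpa [partialInterp_empty] using hS x hx
  | insert ι s hι ih =>
    rw [partialInterp_insert ξ a b hι, Finset.card_insert_of_notMem hι, pow_succ, mul_assoc]
    exact ih (continuousOn_interpCoord hξ (fun ι => (hab ι).le) hg ι)
      fun y hy => norm_interpCoord_le hξ hab hg hS ι hy

lemma norm_sub_partialInterp_le (hξ : ∀ ν, ξ ν ∈ Icc (-1 : ℝ) 1) (hab : ∀ ι, a ι < b ι)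
    {f : (Fin n → ℝ) → ℂ} (hf : ContinuousOn f (boxSet a b)) {E : Fin n → ℝ}
    (hE : ∀ ι, ∀ y ∈ boxSet a b, ‖f y - interpCoord ξ a b ι f y‖ ≤ E ι)
    {x : Fin n → ℝ} (hx : x ∈ boxSet a b) {k : ℕ} (hk : k ≤ n) :
    ‖f x - partialInterp ξ a b (Finset.univ.filter fun i : Fin n => (i : ℕ) < k) f x‖ ≤
      ∑ ι ∈ Finset.univ.filter (fun i : Fin n => (i : ℕ) < k),
        lebesgueConst ξ ^ (ι : ℕ) * E ι := by
  induction k with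
  | zero => simp [partialInterp_empty]
  | succ k ih =>
    set s := Finset.univ.filter fun i : Fin n => (i : ℕ) < k
    set ι : Fin n := ⟨k, hk⟩
    have hι : ι ∉ s := by simp [s, ι]
    have hinsert : Finset.univ.filter (fun i : Fin n => (i : ℕ) < k + 1) = insert ι s := by
      ext i
      simp [s, ι, Fin.ext_iff]
      omega
    have hcard : s.card = k := by
      rw [Fin.card_filter_val_lt]
      omega
    have hstep : ‖partialInterp ξ a b s (f - interpCoord ξ a b ι f) x‖ ≤
        lebesgueConst ξ ^ (ι : ℕ) * E ι := by
      simpa [hcard] using norm_partialInterp_le hξ hab s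
        (hf.sub (continuousOn_interpCoord hξ (fun ι => (hab ι).le) hf ι)) (hE ι) hx
    rw [hinsert, Finset.sum_insert hι, partialInterp_insert ξ a b hι]
    calc ‖f x - partialInterp ξ a b s (interpCoord ξ a b ι f) x‖
        = ‖(f x - partialInterp ξ a b s f x) +
            partialInterp ξ a b s (f - interpCoord ξ a b ι f) x‖ := by
          rw [partialInterp_sub, Pi.sub_apply, sub_add_sub_cancel]
      _ ≤ ‖f x - partialInterp ξ a b s f x‖ +
            ‖partialInterp ξ a b s (f - interpCoord ξ a b ι f) x‖ := norm_add_le _ _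
      _ ≤ _ := by linarith [ih (Nat.le_of_succ_le hk), hstep]

lemma norm_sub_interpCoord_le_sSup (hξ : ∀ ν, ξ ν ∈ Icc (-1 : ℝ) 1) (hab : ∀ ι, a ι < b ι)
    {f : (Fin n → ℝ) → ℂ} (hf : ContinuousOn f (boxSet a b)) (ι : Fin n) {y : Fin n → ℝ}
    (hy : y ∈ boxSet a b) :
    ‖f y - interpCoord ξ a b ι f y‖ ≤
      sSup {r : ℝ | ∃ x' ∈ boxSet a b, r = supNormOn
        (fun t => coordSlice a b f ι x' t - interpC ξ (coordSlice a b f ι x') t) (Icc (-1) 1)} := by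
  have hab' : ∀ ι, a ι ≤ b ι := fun ι => (hab ι).le
  have herr_cont : ∀ x' ∈ boxSet a b, ContinuousOn
      (fun t => coordSlice a b f ι x' t - interpC ξ (coordSlice a b f ι x') t) (Icc (-1) 1) :=
    fun x' hx' => (continuousOn_coordSlice hab' hf ι hx').sub (continuous_interpC ξ _).continuousOn
  obtain ⟨M, hM⟩ := (isCompact_boxSet a b).exists_bound_of_continuousOn hf
  have hbdd : BddAbove {r : ℝ | ∃ x' ∈ boxSet a b, r = supNormOn
      (fun t => coordSlice a b f ι x' t - interpC ξ (coordSlice a b f ι x') t) (Icc (-1) 1)} := by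
    refine ⟨M + lebesgueConst ξ * M, ?_⟩
    rintro _ ⟨x', hx', rfl⟩
    refine supNormOn_le ⟨0, by norm_num⟩ fun t ht => (norm_sub_le _ _).trans (add_le_add ?_ ?_)
    · exact norm_coordSlice_le hab' hM ι hx' ht
    · exact norm_interpC_le_lebesgueConst_mul hξ (continuousOn_coordSlice hab' hf ι hx')
        (fun _ => norm_coordSlice_le hab' hM ι hx') ht
  have hslice : f y - interpCoord ξ a b ι f y =
      coordSlice a b f ι y (phiInvAB (a ι) (b ι) (y ι)) -
        interpC ξ (coordSlice a b f ι y) (phiInvAB (a ι) (b ι) (y ι)) := by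
    rw [coordSlice, phiAB_phiInvAB (hab ι).ne, Function.update_eq_self]
    rfl
  rw [hslice]
  exact (norm_le_supNormOn isCompact_Icc (herr_cont y hy) (phiInvAB_mem_Icc (hab ι) (hy ι))).trans
    (le_csSup hbdd ⟨y, hy, rfl⟩)

end Estimates

theorem stmt11_general (n m : ℕ) (ξ : Fin (m + 1) → ℝ)
    (hξ : ∀ ν, ξ ν ∈ Set.Icc (-1 : ℝ) 1)
    (a b : Fin n → ℝ) (hab : ∀ ι, a ι < b ι)
    (f : (Fin n → ℝ) → ℂ) (hf : ContinuousOn f (boxSet a b)) :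
    ∀ x ∈ boxSet a b,
      ‖f x - tensorInterp ξ a b f x‖ ≤
        ∑ ι : Fin n, (lebesgueConst ξ) ^ (ι : ℕ) *
          sSup {r : ℝ | ∃ x' ∈ boxSet a b,
            r = supNormOn
              (fun t => f (Function.update x' ι (phiAB (a ι) (b ι) t)) -
                interpC ξ (fun s => f (Function.update x' ι (phiAB (a ι) (b ι) s))) t)
              (Set.Icc (-1) 1)} := by
  intro x hx
  have h := norm_sub_partialInterp_le hξ hab hf
    (fun ι y hy => norm_sub_interpCoord_le_sSup hξ hab hf ι hy) hx le_rfl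
  rwa [Finset.filter_true_of_mem fun i _ => i.isLt, partialInterp_univ] at h

/-- tensor interpolation error:
`‖f − 𝕀_B[f]‖_{∞,B} ≤ Σ_{ι=1}^n Λ_m^{ι−1}·max_x ‖f_{x,ι} − 𝕀[f_{x,ι}]‖_{∞,[−1,1]}`,
where `f_{x,ι}(t) = f(x₁,…,x_{ι−1},Φ_{[a_ι,b_ι]}(t),x_{ι+1},…,x_n)`. -/
theorem stmt11 (n m : ℕ) (ξ : Fin (m + 1) → ℝ)
    (hξ : ∀ ν, ξ ν ∈ Set.Icc (-1 : ℝ) 1) (hinj : Function.Injective ξ)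
    (a b : Fin n → ℝ) (hab : ∀ ι, a ι < b ι)
    (f : (Fin n → ℝ) → ℂ) (hf : ContinuousOn f (boxSet a b)) :
    ∀ x ∈ boxSet a b,
      ‖f x - tensorInterp ξ a b f x‖ ≤
        ∑ ι : Fin n, (lebesgueConst ξ) ^ (ι : ℕ) *
          sSup {r : ℝ | ∃ x' ∈ boxSet a b,
            r = supNormOn
              (fun t => f (Function.update x' ι (phiAB (a ι) (b ι) t)) -
                interpC ξ (fun s => f (Function.update x' ι (phiAB (a ι) (b ι) s))) t)
              (Set.Icc (-1) 1)} :=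
  stmt11_general n m ξ hξ a b hab f hf
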